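/- If one-free star expressions r₁ and r₂ are separated both by Boolean expression b and by Boolean expression c, then they are separated by b ∨ c. -/
import Mathlib


variable {At : Type} {Act : Type} {X : Type} {Y : Type} {Z : Type}

/-- One-free star expressions over the alphabet `At · Act`. -/
inductive StExp (At Act : Type) : Type
  | zero : StExp At Act
  | atom : At → Act → StExp At Act
  | add : StExp At Act → StExp At Act → StExp At Act
  | seq : StExp At Act → StExp At Act → StExp At Act
  | star : StExp At Act → StExp At Act → StExp At Act

/-- Provable equality `≡*` of one-free star expressions (Grabmayer–Fokkink axioms). -/
inductive StarEq : StExp At Act → StExp At Act → Prop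
  | refl (r) : StarEq r r
  | symm {r s} : StarEq r s → StarEq s r
  | trans {r s t} : StarEq r s → StarEq s t → StarEq r t
  | congAdd {r r' s s'} : StarEq r r' → StarEq s s' → StarEq (.add r s) (.add r' s')
  | congSeq {r r' s s'} : StarEq r r' → StarEq s s' → StarEq (.seq r s) (.seq r' s')
  | congStar {r r' s s'} : StarEq r r' → StarEq s s' → StarEq (.star r s) (.star r' s')
  | addIdem (r) : StarEq (.add r r) r
  | addZero (r) : StarEq (.add r .zero) r
  | addComm (r s) : StarEq (.add r s) (.add s r)
  | addAssoc (r s t) : StarEq (.add r (.add s t)) (.add (.add r s) t)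
  | zeroSeq (r) : StarEq (.seq .zero r) .zero
  | seqAssoc (r s t) : StarEq (.seq r (.seq s t)) (.seq (.seq r s) t)
  | distR (r s t) : StarEq (.seq (.add r s) t) (.add (.seq r t) (.seq s t))
  | starUnroll (r s) : StarEq (.star r s) (.add (.seq r (.star r s)) s)
  | fix {r s t} : StarEq t (.add (.seq r t) s) → StarEq t (.star r s)

/-- Restriction `b · r` of a one-free star expression to initial atoms satisfying `b`. -/
def bdot (b : At → Bool) : StExp At Act → StExp At Act
  | .zero => .zero
  | .atom α p => if b α then .atom α p else .zero
  | .add r s => .add (bdot b r) (bdot b s)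
  | .seq r s => .seq (bdot b r) s
  | .star r s => .add (.seq (bdot b r) (.star r s)) (bdot b s)

/-- `r₁` and `r₂` are separated by the test `b` (up to `≡*`). -/
def SeparatedBy (b : At → Bool) (r₁ r₂ : StExp At Act) : Prop :=
  StarEq r₁ (bdot b r₁) ∧ StarEq r₂ (bdot (fun α => !b α) r₂)

theorem bdot_bdot (d b : At → Bool) (r : StExp At Act) :
    bdot d (bdot b r) = bdot (fun α => d α && b α) r := by
  induction r with
  | zero => rfl
  | atom α p =>
    cases hb : b α <;> cases hd : d α <;> simp [bdot, hb, hd]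
  | add r s ihr ihs => simp [bdot, ihr, ihs]
  | seq r s ihr => simp [bdot, ihr]
  | star r s ihr ihs => simp [bdot, ihr, ihs]

theorem bdot_cong (d : At → Bool) {r s : StExp At Act} (h : StarEq r s) :
    StarEq (bdot d r) (bdot d s) := by
  induction h with
  | refl r => exact .refl _
  | symm _ ih => exact .symm ih
  | trans _ _ ih1 ih2 => exact .trans ih1 ih2
  | congAdd _ _ ih1 ih2 => exact .congAdd ih1 ih2
  | congSeq h1 h2 ih1 _ => exact .congSeq ih1 h2
  | congStar h1 h2 ih1 ih2 => exact .congAdd (.congSeq ih1 (.congStar h1 h2)) ih2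
  | addIdem r => exact .addIdem _
  | addZero r => exact .addZero _
  | addComm r s => exact .addComm _ _
  | addAssoc r s t => exact .addAssoc _ _ _
  | zeroSeq r => exact .zeroSeq _
  | seqAssoc r s t => exact .seqAssoc _ _ _
  | distR r s t => exact .trans (.congSeq (.refl _) (.refl _)) (.distR _ _ _)
  | starUnroll r s => exact .refl _
  | fix h ih =>
    exact .trans ih (.congAdd (.congSeq (.refl _) (.fix h)) (.refl _))

/-- if `r₁, r₂` are separated by `b` and by `c`, they are separated by
`b ∨ c`. -/
theorem separated_join (b c : At → Bool) (r₁ r₂ : StExp At Act)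
    (hb : SeparatedBy b r₁ r₂) (hc : SeparatedBy c r₁ r₂) :
    SeparatedBy (fun α => b α || c α) r₁ r₂ := by
  obtain ⟨hb1, hb2⟩ := hb
  obtain ⟨hc1, hc2⟩ := hc
  constructor
  · -- r₁ ≡ b·r₁ = ((b∨c)∧b)·r₁ = (b∨c)·(b·r₁) ≡ (b∨c)·r₁
    have h1 : bdot (fun α => b α || c α) (bdot b r₁)
        = bdot b r₁ := by
      rw [bdot_bdot]
      congr 1
      funext α; cases b α <;> cases c α <;> rfl
    have h2 := bdot_cong (fun α => b α || c α) hb1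
    rw [h1] at h2
    exact hb1.trans h2.symm
  · -- r₂ ≡ ¬c·r₂ ≡ ¬c·(¬b·r₂) = (¬c∧¬b)·r₂ = ¬(b∨c)·r₂
    have h2 := bdot_cong (fun α => !c α) hb2
    rw [bdot_bdot] at h2
    have h3 : (fun α => !c α && !b α) = (fun α => !(b α || c α)) := by
      funext α; cases b α <;> cases c α <;> rfl
    rw [h3] at h2
    exact hc2.trans h2
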